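/- arXiv:2510.03492 — 2 statements merged into one kernel-verified Lean document; each statement's English description precedes it below -/
import Mathlib

section
/- Let Γ be a group containing a nontrivial subgroup A that is virtually solvable (i.e., A has a solvable subgroup of finite index) and whose normalizer N_Γ(A) has finite index in Γ. Then Γ satisfies a nontrivial mixed identity: there exists w ∈ Γ∗⟨x⟩ with w ≠ 1 such that w(γ) = 1 for every γ ∈ Γ. -/
open Matrix

/-- The free product `Γ ∗ ⟨x⟩` of a group `Γ` with an infinite cyclic group `⟨x⟩`. -/
abbrev MixedWordGroup (G : Type*) [Group G] : Type _ :=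
  Monoid.Coprod G (Multiplicative ℤ)

/-- The distinguished generator `x` of the free factor `⟨x⟩` in `Γ ∗ ⟨x⟩`. -/
def xGen (G : Type*) [Group G] : MixedWordGroup G :=
  Monoid.Coprod.inr (Multiplicative.ofAdd (1 : ℤ))

/-- Evaluation of a mixed word: the unique homomorphism `Γ ∗ ⟨x⟩ → Γ` restricting to the
identity on `Γ` and sending `x` to `γ`. -/
def evalWord {G : Type*} [Group G] (γ : G) : MixedWordGroup G →* G :=
  Monoid.Coprod.lift (MonoidHom.id G) (zpowersHom G γ)

/-- Word length of `g` with respect to the set `S`. -/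
noncomputable def wordLength {G : Type*} [Group G] (S : Set G) (g : G) : ℕ :=
  sInf {n | ∃ l : List G, (∀ a ∈ l, a ∈ S) ∧ l.length = n ∧ l.prod = g}

/-- The generating set `X ∪ {x, x⁻¹}` of `Γ ∗ ⟨x⟩`. -/
def mixedGenSet {G : Type*} [Group G] (X : Set G) : Set (MixedWordGroup G) :=
  (Monoid.Coprod.inl '' X) ∪ {xGen G, (xGen G)⁻¹}


/-!
Some power `γ ^ m`, uniform in `γ`, normalizes `A`, so `⁅γ ^ (m * k), a⁆ ∈ A` for `a ∈ A`; and some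
uniform power `n` maps `A` into a solvable subgroup `T` of derived length `d`. Hence products of
`n`-th powers of such commutators lie in `T` for every `γ`, and a depth-`d` iterated commutator of
them vanishes identically. The corresponding mixed word is nontrivial: with pairwise distinct
exponents `m * k`, every partial commutator has the reduced form `x ^ α · u · x ^ (-β)` with `u`
beginning and ending in `Γ`, and the frames `α`, `β` of the two arguments of each commutator are
distinct, so the `x`-letters never cancel and the letters of `Γ` never meet.
-/

open scoped commutatorElement

section

variable {H H' : Type*} [Group H] [Group H']

def iterCommutator (g : ℕ → H) : ℕ → ℕ → H
  | 0, j => g j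
  | d + 1, j => ⁅iterCommutator g d j, iterCommutator g d (j + 2 ^ d)⁆

theorem map_iterCommutator (f : H →* H') (g : ℕ → H) (d j : ℕ) :
    f (iterCommutator g d j) = iterCommutator (f ∘ g) d j := by
  induction d generalizing j with
  | zero => rfl
  | succ d ih => simp only [iterCommutator, map_commutatorElement, ih]

theorem iterCommutator_mem_derivedSeries (g : ℕ → H) (d j : ℕ) :
    iterCommutator g d j ∈ derivedSeries H d := by
  induction d generalizing j with
  | zero => simp
  | succ d ih => exact Subgroup.commutator_mem_commutator (ih j) (ih (j + 2 ^ d))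

theorem iterCommutator_eq_one_of_mem {T : Subgroup H} {d : ℕ} (hd : derivedSeries T d = ⊥)
    {g : ℕ → H} (hg : ∀ r, g r ∈ T) (j : ℕ) : iterCommutator g d j = 1 := by
  have hmem := iterCommutator_mem_derivedSeries (fun r => (⟨g r, hg r⟩ : T)) d j
  rw [hd, Subgroup.mem_bot] at hmem
  calc iterCommutator g d j
      = T.subtype (iterCommutator (fun r => (⟨g r, hg r⟩ : T)) d j) :=
        (map_iterCommutator T.subtype (fun r => (⟨g r, hg r⟩ : T)) d j).symm
    _ = 1 := by rw [hmem, map_one]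

def blockWord (x a : H) (n p q : ℕ) : H := ⁅x ^ p, a⁆ ^ n * ⁅a, x ^ q⁆ ^ n

def lawWord (x a : H) (m n d : ℕ) : H :=
  iterCommutator (fun r => blockWord x a n (m * (2 * r + 1)) (m * (2 * r + 2))) d 0

theorem map_lawWord (f : H →* H') (x a : H) (m n d : ℕ) :
    f (lawWord x a m n d) = lawWord (f x) (f a) m n d := by
  simp only [lawWord, map_iterCommutator]
  congr 1
  funext r
  simp [blockWord, map_commutatorElement]

-- Cancelling the middle `a⁻¹ * a` exposes the reduced form of a block.
theorem commutator_pow_succ_mul_commutator_pow_succ (y z a : H) (k : ℕ) :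
    ⁅y, a⁆ ^ (k + 1) * ⁅a, z⁆ ^ (k + 1)
      = (⁅y, a⁆ ^ k * (y * a * y⁻¹)) * (⁅z, a⁆ ^ k * (z * a * z⁻¹))⁻¹ := by
  rw [← commutatorElement_inv z a, inv_pow, pow_succ, pow_succ, _root_.mul_inv_rev,
    _root_.mul_inv_rev]
  generalize ⁅y, a⁆ ^ k = c
  generalize (⁅z, a⁆ ^ k)⁻¹ = c'
  simp only [commutatorElement_def]
  group

end

section

variable {G : Type*} [Group G]

theorem Subgroup.pow_factorial_index_mem (H : Subgroup G) [H.FiniteIndex] (g : G) :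
    g ^ H.index.factorial ∈ H :=
  H.pow_mem_of_index_ne_zero_of_dvd FiniteIndex.index_ne_zero g
    fun _ hpos hle => Nat.dvd_factorial hpos hle

theorem commutatorElement_mem_of_mem_normalizer {A : Subgroup G} {y a : G}
    (hy : y ∈ Subgroup.normalizer (A : Set G)) (ha : a ∈ A) : ⁅y, a⁆ ∈ A :=
  mul_mem ((Subgroup.mem_normalizer_iff.mp hy a).mp ha) (inv_mem ha)

theorem blockWord_mem {A T : Subgroup G} {n : ℕ} (hT : ∀ y ∈ A, y ^ n ∈ T) {γ a : G}
    (ha : a ∈ A) {p q : ℕ} (hp : γ ^ p ∈ Subgroup.normalizer (A : Set G))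
    (hq : γ ^ q ∈ Subgroup.normalizer (A : Set G)) : blockWord γ a n p q ∈ T := by
  refine mul_mem (hT _ (commutatorElement_mem_of_mem_normalizer hp ha)) (hT _ ?_)
  rw [← commutatorElement_inv]
  exact inv_mem (commutatorElement_mem_of_mem_normalizer hq ha)

theorem lawWord_eq_one {A T : Subgroup G} {d n m : ℕ} (hd : derivedSeries T d = ⊥)
    (hT : ∀ y ∈ A, y ^ n ∈ T) {γ a : G} (ha : a ∈ A)
    (hγ : γ ^ m ∈ Subgroup.normalizer (A : Set G)) : lawWord γ a m n d = 1 := by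
  have hpow : ∀ k, γ ^ (m * k) ∈ Subgroup.normalizer (A : Set G) :=
    fun k => pow_mul γ m k ▸ pow_mem hγ k
  exact iterCommutator_eq_one_of_mem hd (fun r => blockWord_mem hT ha (hpow _) (hpow _)) 0

theorem Subgroup.exists_derivedSeries_eq_bot_forall_pow_mem {A : Subgroup G} {S : Subgroup A}
    [S.FiniteIndex] [hS : Group.IsSolvable S] :
    ∃ (T : Subgroup G) (d : ℕ), derivedSeries T d = ⊥ ∧ ∀ y ∈ A, y ^ S.index.factorial ∈ T := by
  have : Group.IsSolvable (S.map A.subtype) :=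
    Group.isSolvable_of_surjective
      (f := (S.equivMapOfInjective A.subtype A.subtype_injective).toMonoidHom)
      (S.equivMapOfInjective A.subtype A.subtype_injective).surjective
  obtain ⟨d, hd⟩ := Group.IsSolvable.solvable (G := S.map A.subtype)
  exact ⟨S.map A.subtype, d, hd, fun y hy => ⟨_, S.pow_factorial_index_mem ⟨y, hy⟩, rfl⟩⟩

end

namespace Monoid.CoprodI

variable {ι : Type*} {M : ι → Type*}

theorem NeWord.prod_ne_one [∀ i, Monoid (M i)] {i j : ι} (w : NeWord M i j) : w.prod ≠ 1 := by
  classical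
  intro h
  have : w.toWord = Word.empty := Word.equiv.symm.injective (h.trans Word.prod_empty.symm)
  exact w.toList_ne_nil (congrArg Word.toList this)

variable [∀ i, Group (M i)]

def IsFramed (i : ι) {k : ι} (x : M k) (α β : ℕ) (w : CoprodI M) : Prop :=
  ∃ u : NeWord M i i, w = of x ^ α * u.prod * (of x ^ β)⁻¹

variable {i k : ι} {x : M k}

theorem isFramed_conj {a : M i} (ha : a ≠ 1) (α : ℕ) :
    IsFramed i x α α (of x ^ α * of a * (of x ^ α)⁻¹) :=
  ⟨.singleton a ha, by rw [NeWord.prod_singleton]⟩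

theorem IsFramed.inv {α β : ℕ} {w : CoprodI M} (h : IsFramed i x α β w) :
    IsFramed i x β α w⁻¹ := by
  obtain ⟨u, rfl⟩ := h
  exact ⟨u.inv, by simp only [NeWord.inv_prod, _root_.mul_inv_rev, inv_inv, mul_assoc]⟩

theorem IsFramed.mul (hik : i ≠ k) (hx : ¬IsOfFinOrder x) {α₁ β₁ α₂ β₂ : ℕ}
    {w₁ w₂ : CoprodI M} (h₁ : IsFramed i x α₁ β₁ w₁) (h₂ : IsFramed i x α₂ β₂ w₂)
    (hne : β₁ ≠ α₂) : IsFramed i x α₁ β₂ (w₁ * w₂) := by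
  obtain ⟨u₁, rfl⟩ := h₁
  obtain ⟨u₂, rfl⟩ := h₂
  have hgap : (x ^ β₁)⁻¹ * x ^ α₂ ≠ 1 := fun h =>
    hne (injective_pow_iff_not_isOfFinOrder.mpr hx (inv_mul_eq_one.mp h))
  refine ⟨(u₁.append hik (.singleton _ hgap)).append hik.symm u₂, ?_⟩
  simp only [NeWord.append_prod, NeWord.prod_singleton, map_mul, map_inv, map_pow, mul_assoc]

theorem IsFramed.commutatorElement (hik : i ≠ k) (hx : ¬IsOfFinOrder x) {α₁ β₁ α₂ β₂ : ℕ}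
    {w₁ w₂ : CoprodI M} (h₁ : IsFramed i x α₁ β₁ w₁) (h₂ : IsFramed i x α₂ β₂ w₂)
    (hβα : β₁ ≠ α₂) (hββ : β₂ ≠ β₁) (hαβ : α₁ ≠ β₂) : IsFramed i x α₁ α₂ ⁅w₁, w₂⁆ := by
  rw [commutatorElement_def]
  exact ((h₁.mul hik hx h₂ hβα).mul hik hx h₁.inv hββ).mul hik hx h₂.inv hαβ

theorem IsFramed.ne_one (hik : i ≠ k) (hx : ¬IsOfFinOrder x) {α β : ℕ} {w : CoprodI M}
    (h : IsFramed i x α β w) (hα : α ≠ 0) (hβ : β ≠ 0) : w ≠ 1 := by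
  obtain ⟨u, rfl⟩ := h
  have hpow : ∀ {n : ℕ}, n ≠ 0 → x ^ n ≠ 1 := fun hn h =>
    hn (injective_pow_iff_not_isOfFinOrder.mpr hx (h.trans (pow_zero x).symm))
  have := ((NeWord.singleton _ (hpow hα)).append hik.symm
    (u.append hik (.singleton _ (inv_ne_one.mpr (hpow hβ))))).prod_ne_one
  simpa only [NeWord.append_prod, NeWord.prod_singleton, map_inv, map_pow, mul_assoc] using this

theorem isFramed_commutator_pow_mul_conj (hik : i ≠ k) (hx : ¬IsOfFinOrder x) {a : M i}
    (ha : a ≠ 1) {p : ℕ} (hp : p ≠ 0) (n : ℕ) :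
    IsFramed i x p p (⁅of x ^ p, of a⁆ ^ n * (of x ^ p * of a * (of x ^ p)⁻¹)) := by
  have hcomm : IsFramed i x p 0 ⁅of x ^ p, of a⁆ := by
    have hinv : IsFramed i x 0 0 (of a⁻¹) := by
      simpa using isFramed_conj (x := x) (inv_ne_one.mpr ha) 0
    simpa [commutatorElement_def] using (isFramed_conj (x := x) ha p).mul hik hx hinv hp
  induction n with
  | zero => simpa using isFramed_conj ha p
  | succ n ih => simpa only [pow_succ', mul_assoc] using hcomm.mul hik hx ih hp.symm

theorem isFramed_blockWord (hik : i ≠ k) (hx : ¬IsOfFinOrder x) {a : M i} (ha : a ≠ 1)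
    {n p q : ℕ} (hn : n ≠ 0) (hp : p ≠ 0) (hq : q ≠ 0) (hpq : p ≠ q) :
    IsFramed i x p q (blockWord (of x) (of a) n p q) := by
  obtain ⟨k, rfl⟩ := Nat.exists_eq_succ_of_ne_zero hn
  rw [blockWord, commutator_pow_succ_mul_commutator_pow_succ]
  exact (isFramed_commutator_pow_mul_conj hik hx ha hp k).mul hik hx
    (isFramed_commutator_pow_mul_conj hik hx ha hq k).inv hpq

theorem isFramed_iterCommutator (hik : i ≠ k) (hx : ¬IsOfFinOrder x) {e : ℕ → ℕ}
    (he : Function.Injective e) {g : ℕ → CoprodI M}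
    (hg : ∀ r, IsFramed i x (e (2 * r)) (e (2 * r + 1)) (g r)) (d j : ℕ) :
    IsFramed i x (e (2 * j)) (e (2 * j + 2 ^ d)) (iterCommutator g d j) := by
  induction d generalizing j with
  | zero => exact hg j
  | succ d ih =>
    -- the four frames sit at the positions `2j`, `2j + 2^d`, `2j + 2^(d+1)`, `2j + 3 * 2^d`
    have hpos : 0 < 2 ^ d := Nat.two_pow_pos d
    have h := (ih j).commutatorElement hik hx (ih (j + 2 ^ d))
      (he.ne (by omega)) (he.ne (by omega)) (he.ne (by omega))
    rwa [show 2 * (j + 2 ^ d) = 2 * j + 2 ^ (d + 1) by rw [pow_succ]; ring] at h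

theorem lawWord_ne_one (hik : i ≠ k) (hx : ¬IsOfFinOrder x) {a : M i} (ha : a ≠ 1)
    {m n : ℕ} (hm : m ≠ 0) (hn : n ≠ 0) (d : ℕ) : lawWord (of x) (of a) m n d ≠ 1 := by
  have he : Function.Injective fun r => m * (r + 1) := fun r s h => by
    simpa using Nat.eq_of_mul_eq_mul_left (Nat.pos_of_ne_zero hm) h
  have hblock : ∀ r, IsFramed i x (m * (2 * r + 1)) (m * (2 * r + 1 + 1))
      (blockWord (of x) (of a) n (m * (2 * r + 1)) (m * (2 * r + 2))) := fun r =>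
    isFramed_blockWord hik hx ha hn (by positivity) (by positivity) (he.ne (by omega))
  exact (isFramed_iterCommutator hik hx he hblock d 0).ne_one hik hx
    (by positivity) (by positivity)

end Monoid.CoprodI

universe u

open Monoid

-- `ULift` because the factors of a `CoprodI` live in a single universe.
def mixedFactor (G : Type u) [Group G] : Bool → Type u :=
  fun b => cond b G (ULift (Multiplicative ℤ))

instance (G : Type u) [Group G] : ∀ b, Group (mixedFactor G b)
  | true => inferInstanceAs (Group G)
  | false => inferInstanceAs (Group (ULift (Multiplicative ℤ)))

def MixedWordGroup.toCoprodI (G : Type u) [Group G] :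
    MixedWordGroup G →* CoprodI (mixedFactor G) :=
  Coprod.lift (CoprodI.of (M := mixedFactor G) (i := true))
    ((CoprodI.of (i := false)).comp (MulEquiv.ulift (α := Multiplicative ℤ)).symm.toMonoidHom)

theorem not_isOfFinOrder_up_ofAdd_one :
    ¬IsOfFinOrder (ULift.up.{u} (Multiplicative.ofAdd (1 : ℤ))) := fun h =>
  not_isOfFinAddOrder_of_isAddTorsionFree one_ne_zero <| isOfFinOrder_ofAdd_iff.mp <|
    (MulEquiv.ulift : ULift.{u} (Multiplicative ℤ) ≃* _).toMonoidHom.isOfFinOrder h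

theorem lawWord_xGen_ne_one {G : Type u} [Group G] {a : G} (ha : a ≠ 1) {m n : ℕ} (hm : m ≠ 0)
    (hn : n ≠ 0) (d : ℕ) : lawWord (xGen G) (Coprod.inl a) m n d ≠ 1 := by
  intro h
  have := congrArg (MixedWordGroup.toCoprodI G) h
  rw [map_lawWord, map_one] at this
  exact CoprodI.lawWord_ne_one (M := mixedFactor G) (by decide) not_isOfFinOrder_up_ofAdd_one
    ha hm hn d this

theorem evalWord_lawWord {G : Type*} [Group G] (γ a : G) (m n d : ℕ) :
    evalWord γ (lawWord (xGen G) (Coprod.inl a) m n d) = lawWord γ a m n d := by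
  rw [map_lawWord]
  congr
  simp [evalWord, xGen]

theorem stmt6 {G : Type*} [Group G] (A : Subgroup G) (hA : A ≠ ⊥)
    (hvs : ∃ S : Subgroup ↥A, S.FiniteIndex ∧ IsSolvable ↥S)
    (hN : (Subgroup.normalizer (A : Set G)).FiniteIndex) :
    ∃ w : MixedWordGroup G, w ≠ 1 ∧ ∀ γ : G, evalWord γ w = 1 := by
  obtain ⟨S, hS, hSsolv⟩ := hvs
  obtain ⟨a, haA, ha⟩ := A.bot_or_exists_ne_one.resolve_left hA
  obtain ⟨T, d, hd, hT⟩ :=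
    Subgroup.exists_derivedSeries_eq_bot_forall_pow_mem (S := S) (hS := hSsolv)
  refine ⟨lawWord (xGen G) (Coprod.inl a) (Subgroup.normalizer (A : Set G)).index.factorial
    S.index.factorial d,
    lawWord_xGen_ne_one ha (Nat.factorial_ne_zero _) (Nat.factorial_ne_zero _) d, fun γ => ?_⟩
  rw [evalWord_lawWord]
  exact lawWord_eq_one hd hT haA (Subgroup.pow_factorial_index_mem _ γ)
end

section
/- Let Γ be a group containing a nontrivial subgroup B whose normalizer N_Γ(B) has finite index in Γ and whose centralizer C_Γ(B) is nontrivial. Then Γ satisfies a nontrivial mixed identity: there exists w ∈ Γ∗⟨x⟩ with w ≠ 1 such that w(γ) = 1 for every γ ∈ Γ. -/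
open Matrix

/-!
Let `k` be the index of the normal core of `N_Γ(B)`, so that `γ ^ k` normalizes `B` for every
`γ`. For `1 ≠ b ∈ B` and `1 ≠ c ∈ C_Γ(B)`, the mixed word `w = ⁅x ^ k * b * x⁻ᵏ, c⁆` evaluates
at `γ` to the commutator of an element of `B` with `c`, which is trivial. On the other hand `w`
is a reduced word of length 8 in `Γ ∗ ⟨x⟩`, so `w ≠ 1`.
-/

open Monoid
open scoped commutatorElement

theorem Monoid.CoprodI.NeWord.prod_ne_one_s7 {ι : Type*} {M : ι → Type*} [∀ i, Monoid (M i)]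
    {i j : ι} (w : NeWord M i j) : w.prod ≠ 1 := by
  classical
  intro h
  have hw : w.toWord = Word.empty :=
    Word.equiv.symm.injective (h.trans Word.prod_empty.symm)
  exact w.toList_ne_nil (congrArg Word.toList hw)

theorem Subgroup.exists_ne_zero_forall_pow_mem {G : Type*} [Group G] (H : Subgroup G)
    [H.FiniteIndex] : ∃ k ≠ 0, ∀ g : G, g ^ k ∈ H :=
  ⟨H.normalCore.index, Subgroup.FiniteIndex.index_ne_zero,
    fun g => H.normalCore_le (H.normalCore.pow_index_mem g)⟩

namespace Monoid.Coprod

universe u v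

/-- `Monoid.Coprod` has no normal form theory of its own, so `G ∗ H` is compared with the
indexed free product `CoprodI`, whose factors must share a universe. -/
abbrev LiftedFactors (G : Type u) (H : Type v) : Bool → Type max u v :=
  fun i => cond i (ULift.{v} G) (ULift.{u} H)

variable {G : Type u} {H : Type v} [Group G] [Group H]

instance : ∀ i, Group (LiftedFactors G H i)
  | true => inferInstanceAs (Group (ULift G))
  | false => inferInstanceAs (Group (ULift H))

def toCoprodI : G ∗ H →* CoprodI (LiftedFactors G H) :=
  lift ((CoprodI.of (i := true)).comp MulEquiv.ulift.symm.toMonoidHom)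
    ((CoprodI.of (i := false)).comp MulEquiv.ulift.symm.toMonoidHom)

@[simp]
theorem toCoprodI_inl (g : G) : toCoprodI (inl g : G ∗ H) = CoprodI.of (i := true) (ULift.up g) :=
  rfl

@[simp]
theorem toCoprodI_inr (h : H) : toCoprodI (inr h : G ∗ H) = CoprodI.of (i := false) (ULift.up h) :=
  rfl

theorem commutatorElement_conj_inr_inl_ne_one {t : H} (ht : t ≠ 1) {b c : G} (hb : b ≠ 1)
    (hc : c ≠ 1) : ⁅inr t * inl b * (inr t)⁻¹, inl c⁆ ≠ (1 : G ∗ H) := by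
  let inlLetter (g : G) (hg : g ≠ 1) : CoprodI.NeWord (LiftedFactors G H) true true :=
    .singleton (ULift.up g) (by simpa [ULift.ext_iff] using hg)
  let inrLetter (h : H) (hh : h ≠ 1) : CoprodI.NeWord (LiftedFactors G H) false false :=
    .singleton (ULift.up h) (by simpa [ULift.ext_iff] using hh)
  have ft : false ≠ true := by decide
  have tf : true ≠ false := by decide
  let w := (inrLetter t ht).append ft <| (inlLetter b hb).append tf <|
    (inrLetter t⁻¹ (inv_ne_one.2 ht)).append ft <| (inlLetter c hc).append tf <|
    (inrLetter t ht).append ft <| (inlLetter b⁻¹ (inv_ne_one.2 hb)).append tf <|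
    (inrLetter t⁻¹ (inv_ne_one.2 ht)).append ft <| inlLetter c⁻¹ (inv_ne_one.2 hc)
  intro h
  apply w.prod_ne_one_s7
  rw [← map_one toCoprodI, ← h]
  simp only [w, inlLetter, inrLetter, CoprodI.NeWord.append_prod, CoprodI.NeWord.prod_singleton,
    commutatorElement_def, _root_.mul_inv_rev, inv_inv, ← map_inv, map_mul, toCoprodI_inl,
    toCoprodI_inr, mul_assoc]

end Monoid.Coprod

open Coprod Subgroup

theorem evalWord_inl {G : Type*} [Group G] (γ g : G) : evalWord γ (inl g) = g := rfl

theorem evalWord_xGen {G : Type*} [Group G] (γ : G) : evalWord γ (xGen G) = γ := by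
  simp [evalWord, xGen]

theorem xGen_pow {G : Type*} [Group G] (k : ℕ) :
    xGen G ^ k = inr (Multiplicative.ofAdd (k : ℤ)) := by
  rw [xGen, ← map_pow, ← ofAdd_nsmul, nsmul_one]

theorem stmt7 {G : Type*} [Group G] (B : Subgroup G) (hB : B ≠ ⊥)
    (hN : (Subgroup.normalizer (B : Set G)).FiniteIndex)
    (hC : Subgroup.centralizer (B : Set G) ≠ ⊥) :
    ∃ w : MixedWordGroup G, w ≠ 1 ∧ ∀ γ : G, evalWord γ w = 1 := by
  obtain ⟨b, hbB, hb⟩ := B.bot_or_exists_ne_one.resolve_left hB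
  obtain ⟨c, hcC, hc⟩ := (centralizer (B : Set G)).bot_or_exists_ne_one.resolve_left hC
  obtain ⟨k, hk, hpow⟩ := (normalizer (B : Set G)).exists_ne_zero_forall_pow_mem
  refine ⟨⁅xGen G ^ k * inl b * (xGen G ^ k)⁻¹, inl c⁆, ?_, fun γ => ?_⟩
  · rw [xGen_pow]
    exact commutatorElement_conj_inr_inl_ne_one (by simpa using hk) hb hc
  · have hconj : γ ^ k * b * (γ ^ k)⁻¹ ∈ B := (mem_normalizer_iff.mp (hpow γ) b).mp hbB
    simpa [map_commutatorElement, evalWord_inl, evalWord_xGen,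
      commutatorElement_eq_one_iff_mul_comm] using mem_centralizer_iff.mp hcC _ hconj
end
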